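/- Let (Y_{h,i,j})_{1 ≤ h < i < j ≤ n} be a suffix-determined family of {0,1}-valued random variables on uniformly random bijections π : S → {1,…,n} that satisfies the averaging property. Then the random variable Y = Σ_{1≤h<i<j≤n} Y_{h,i,j} has an exponential upper tail: for every real T > 0, Pr[Y ≥ T] ≤ exp(E[Y] − T·ln 2). -/

import Mathlib

/-!
Let `r m` be the partition of the bijections by the elements of priorities `m, …, n`: it gets
coarser as `m` grows, and the column sum `C h` is constant on the classes of `r h`. Writing
`Sₘ = C 1 + ⋯ + C m`, induction on `m` gives `E[2 ^ Sₘ | K] ≤ exp E[Sₘ | K]` on every class `K` of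
`r (m + 1)`. For the step, split a class `K` of `r (m + 2)` into classes `K'` of `r (m + 1)`. On `K'`
the column `C (m + 1)` is a constant `c ≥ 0`, so `E[2 ^ Sₘ₊₁ | K'] ≤ 2 ^ c · exp (E[Sₘ₊₁ | K'] - c)
≤ exp E[Sₘ₊₁ | K']`; by the averaging property `E[Sₘ₊₁ | K']` is the same for all `K' ⊆ K`, hence
equal to `E[Sₘ₊₁ | K]`. At `m = n` this is `E[2 ^ Y] ≤ exp E[Y]`, and Markov's inequality for `2 ^ Y`
gives the tail bound.
-/

open scoped Classical BigOperators

/-- Conditional expectation of `f` given the event `A`, for the uniform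
distribution on a finite type. -/
noncomputable def cexp {α : Type} [Fintype α] (A : α → Prop) (f : α → ℝ) : ℝ :=
  (∑ x ∈ Finset.univ.filter A, f x) / ((Finset.univ.filter A).card : ℝ)

/-- Probability of the event `A` under the uniform distribution on a finite type. -/
noncomputable def unifPr {α : Type} [Fintype α] (A : α → Prop) : ℝ :=
  ((Finset.univ.filter A).card : ℝ) / (Fintype.card α : ℝ)

/-- Expectation of `f` under the uniform distribution on a finite type. -/
noncomputable def unifE {α : Type} [Fintype α] (f : α → ℝ) : ℝ :=
  (∑ x : α, f x) / (Fintype.card α : ℝ)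


open Finset
-- not `open Real`, whose notation `π` would capture the binder names of the theorem
open Real (exp log)

section ConditionalAverage

variable {Ω : Type} [Fintype Ω]

theorem cexp_congr {A : Ω → Prop} {f g : Ω → ℝ} (h : ∀ x, A x → f x = g x) :
    cexp A f = cexp A g := by
  unfold cexp
  rw [sum_congr rfl fun x hx => h x (mem_filter.1 hx).2]

theorem cexp_mono {A : Ω → Prop} {f g : Ω → ℝ} (h : ∀ x, A x → f x ≤ g x) :
    cexp A f ≤ cexp A g :=
  div_le_div_of_nonneg_right (sum_le_sum fun x hx => h x (mem_filter.1 hx).2) (Nat.cast_nonneg _)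

theorem cexp_const {A : Ω → Prop} {x₀ : Ω} (hx₀ : A x₀) (c : ℝ) : cexp A (fun _ => c) = c := by
  have hpos : (0 : ℝ) < #(univ.filter A) := by
    exact_mod_cast card_pos.2 ⟨x₀, mem_filter.2 ⟨mem_univ _, hx₀⟩⟩
  rw [cexp, sum_const, nsmul_eq_mul, mul_div_cancel_left₀ _ hpos.ne']

theorem cexp_const_mul (A : Ω → Prop) (f : Ω → ℝ) (c : ℝ) :
    cexp A (fun x => c * f x) = c * cexp A f := by
  rw [cexp, cexp, ← mul_sum, mul_div_assoc]

theorem cexp_add_const {A : Ω → Prop} {x₀ : Ω} (hx₀ : A x₀) (f : Ω → ℝ) (c : ℝ) :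
    cexp A (fun x => f x + c) = cexp A f + c := by
  have hc := cexp_const hx₀ c
  unfold cexp at hc ⊢
  rw [sum_add_distrib, add_div, hc]

theorem cexp_true (f : Ω → ℝ) : cexp (fun _ => True) f = unifE f := by
  rw [cexp, unifE, filter_true, card_univ]

theorem cexp_cexp {s : Ω → Ω → Prop} (hs : Equivalence s) {A : Ω → Prop}
    (hA : ∀ y z, A y → s y z → A z) (f : Ω → ℝ) :
    cexp A (fun y => cexp (s y) f) = cexp A f := by
  set cell : Ω → Finset Ω := fun z => univ.filter (s z)
  have hcell : ∀ y z, s y z → cell y = cell z := fun y z h => by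
    ext w
    simp only [cell, mem_filter, mem_univ, true_and]
    exact ⟨hs.trans (hs.symm h), hs.trans h⟩
  have hpos : ∀ z, (0 : ℝ) < #(cell z) := fun z => by
    exact_mod_cast card_pos.2 ⟨z, mem_filter.2 ⟨mem_univ _, hs.refl z⟩⟩
  unfold cexp
  congr 1
  calc ∑ y ∈ univ.filter A, (∑ z ∈ cell y, f z) / #(cell y)
      = ∑ y ∈ univ.filter A, ∑ z ∈ cell y, f z / #(cell z) := by
        refine sum_congr rfl fun y _ => ?_
        rw [sum_div]
        exact sum_congr rfl fun z hz => by rw [hcell y z (mem_filter.1 hz).2]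
    _ = ∑ z ∈ univ.filter A, ∑ y ∈ cell z, f z / #(cell z) := by
        refine sum_comm' fun y z => ?_
        simp only [cell, mem_filter, mem_univ, true_and]
        exact ⟨fun ⟨hy, hyz⟩ => ⟨hs.symm hyz, hA y z hy hyz⟩,
          fun ⟨hzy, hz⟩ => ⟨hA z y hz hzy, hs.symm hzy⟩⟩
    _ = ∑ z ∈ univ.filter A, f z := by
        refine sum_congr rfl fun z _ => ?_
        rw [sum_const, nsmul_eq_mul, mul_div_cancel₀ _ (hpos z).ne']

end ConditionalAverage

theorem cexp_exp_mul_le_of_add_const {Ω : Type} [Fintype Ω] {A : Ω → Prop} {x₀ : Ω}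
    (hx₀ : A x₀) {f g : Ω → ℝ} {c l : ℝ} (hc : 0 ≤ c) (hl : l ≤ 1)
    (hg : ∀ x, A x → g x = f x + c)
    (hf : cexp A (fun x => exp (l * f x)) ≤ exp (cexp A f)) :
    cexp A (fun x => exp (l * g x)) ≤ exp (cexp A g) := by
  have hmean : cexp A g = cexp A f + c := by
    rw [cexp_congr hg, cexp_add_const hx₀]
  calc cexp A (fun x => exp (l * g x))
      = exp (l * c) * cexp A (fun x => exp (l * f x)) := by
        rw [← cexp_const_mul]
        exact cexp_congr fun x hx => by rw [hg x hx, mul_add, Real.exp_add, mul_comm]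
    _ ≤ exp (l * c) * exp (cexp A f) := by gcongr
    _ ≤ exp (cexp A g) := by
        rw [← Real.exp_add, hmean, Real.exp_le_exp]
        nlinarith [mul_nonneg (sub_nonneg.2 hl) hc]

/-- An abstraction of suffix-determined column sums with the averaging property: `r m` is the
partition by the elements of priorities `m, …, n`. -/
structure AveragingFiltration {Ω : Type} [Fintype Ω] (r : ℕ → Ω → Ω → Prop) (C : ℕ → Ω → ℝ) :
    Prop where
  equivalence (m : ℕ) : Equivalence (r m)
  monotone : Monotone r
  nonneg (h : ℕ) (hh : 1 ≤ h) (x : Ω) : 0 ≤ C h x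
  const (h : ℕ) (hh : 1 ≤ h) (x y : Ω) (hxy : r h x y) : C h x = C h y
  averaging (m : ℕ) (hm : 1 ≤ m) (x y : Ω) (hxy : r (m + 1) x y) :
    cexp (r m x) (fun z => ∑ h ∈ Icc 1 m, C h z) = cexp (r m y) (fun z => ∑ h ∈ Icc 1 m, C h z)

namespace AveragingFiltration

variable {Ω : Type} [Fintype Ω] {r : ℕ → Ω → Ω → Prop} {C : ℕ → Ω → ℝ}

theorem cexp_exp_mul_sum_le (hF : AveragingFiltration r C) {l : ℝ} (hl : l ≤ 1) (m : ℕ) (x : Ω) :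
    cexp (r (m + 1) x) (fun z => exp (l * ∑ h ∈ Icc 1 m, C h z))
      ≤ exp (cexp (r (m + 1) x) (fun z => ∑ h ∈ Icc 1 m, C h z)) := by
  induction m generalizing x with
  | zero =>
    simp only [Icc_eq_empty_of_lt zero_lt_one, sum_empty, mul_zero, Real.exp_zero]
    rw [cexp_const ((hF.equivalence 1).refl x), cexp_const ((hF.equivalence 1).refl x),
      Real.exp_zero]
  | succ m ih =>
    set S : ℕ → Ω → ℝ := fun m z => ∑ h ∈ Icc 1 m, C h z
    have hS : ∀ z, S (m + 1) z = S m z + C (m + 1) z := fun z => sum_Icc_succ_top (by omega) _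
    have hclass : ∀ y, cexp (r (m + 1) y) (fun z => exp (l * S (m + 1) z))
        ≤ exp (cexp (r (m + 1) y) (S (m + 1))) := fun y =>
      cexp_exp_mul_le_of_add_const ((hF.equivalence _).refl y) (hF.nonneg _ le_add_self y) hl
        (fun z hz => by rw [hS, hF.const _ le_add_self y z hz]) (ih y)
    have hfiner : ∀ y z, r (m + 2) x y → r (m + 1) y z → r (m + 2) x z :=
      fun y z hxy hyz => (hF.equivalence _).trans hxy (hF.monotone (Nat.le_succ _) y z hyz)
    have hmean : ∀ y, r (m + 2) x y →
        cexp (r (m + 1) y) (S (m + 1)) = cexp (r (m + 1) x) (S (m + 1)) :=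
      fun y hxy => (hF.averaging _ le_add_self x y hxy).symm
    have hx := (hF.equivalence (m + 2)).refl x
    calc cexp (r (m + 2) x) (fun z => exp (l * S (m + 1) z))
        = cexp (r (m + 2) x) (fun y => cexp (r (m + 1) y) (fun z => exp (l * S (m + 1) z))) :=
          (cexp_cexp (hF.equivalence _) hfiner _).symm
      _ ≤ cexp (r (m + 2) x) (fun y => exp (cexp (r (m + 1) y) (S (m + 1)))) :=
          cexp_mono fun y _ => hclass y
      _ = exp (cexp (r (m + 2) x) (fun y => cexp (r (m + 1) y) (S (m + 1)))) := by
          rw [cexp_congr fun y hy => by rw [hmean y hy], cexp_const hx,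
            cexp_congr fun y hy => hmean y hy, cexp_const hx]
      _ = exp (cexp (r (m + 2) x) (S (m + 1))) := by rw [cexp_cexp (hF.equivalence _) hfiner]

theorem unifE_exp_mul_sum_le (hF : AveragingFiltration r C) {l : ℝ} (hl : l ≤ 1) {N : ℕ}
    (htop : ∀ x y, r (N + 1) x y) :
    unifE (fun z => exp (l * ∑ h ∈ Icc 1 N, C h z))
      ≤ exp (unifE (fun z => ∑ h ∈ Icc 1 N, C h z)) := by
  rcases isEmpty_or_nonempty Ω with hΩ | ⟨⟨x⟩⟩
  · simp [unifE]
  · have htrue : r (N + 1) x = fun _ => True :=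
      funext fun y => propext (iff_true_intro (htop x y))
    simpa only [htrue, cexp_true] using hF.cexp_exp_mul_sum_le hl N x

end AveragingFiltration

theorem unifPr_le_exp_mul_unifE_exp {Ω : Type} [Fintype Ω] (F : Ω → ℝ) {l : ℝ} (hl : 0 ≤ l)
    (T : ℝ) :
    unifPr (fun x => T ≤ F x) ≤ exp (-(l * T)) * unifE (fun x => exp (l * F x)) := by
  rw [unifPr, unifE, mul_div_assoc', mul_sum]
  refine div_le_div_of_nonneg_right ?_ (Nat.cast_nonneg _)
  calc (#(univ.filter fun x => T ≤ F x) : ℝ)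
      = ∑ x ∈ univ.filter (fun x => T ≤ F x), (1 : ℝ) := by rw [sum_const, nsmul_one]
    _ ≤ ∑ x ∈ univ.filter (fun x => T ≤ F x), exp (-(l * T)) * exp (l * F x) :=
        sum_le_sum fun x hx => by
          rw [← Real.exp_add]
          exact Real.one_le_exp (by nlinarith [(mem_filter.1 hx).2])
    _ ≤ ∑ x, exp (-(l * T)) * exp (l * F x) :=
        sum_le_sum_of_subset_of_nonneg (subset_univ _) fun _ _ _ => by positivity

section Priorities

variable {S : Type} {n : ℕ}

/-- `π` and `π'` assign the same elements to the priorities `m, …, n`; here `k : Fin n` is the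
priority `k + 1`. -/
def SameSuffix (m : ℕ) (π π' : S ≃ Fin n) : Prop :=
  ∀ k : Fin n, m ≤ (k : ℕ) + 1 → π.symm k = π'.symm k

theorem sameSuffix_equivalence (m : ℕ) : Equivalence (SameSuffix (S := S) (n := n) m) where
  refl _ _ _ := rfl
  symm h k hk := (h k hk).symm
  trans h h' k hk := (h k hk).trans (h' k hk)

theorem sameSuffix_monotone : Monotone (SameSuffix (S := S) (n := n)) :=
  fun _ _ hmm' _ _ h k hk => h k (hmm'.trans hk)

theorem sameSuffix_of_lt {m : ℕ} (hm : n < m) (π π' : S ≃ Fin n) : SameSuffix m π π' :=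
  fun k hk => absurd hk (by omega)

theorem placed_iff_sameSuffix {m : ℕ} {a : S} {t : ℕ → S} {x π : S ≃ Fin n}
    (ha : (x a : ℕ) + 1 = m) (ht : ∀ k, m + 1 ≤ k → k ≤ n → (x (t k) : ℕ) + 1 = k) :
    ((π a : ℕ) + 1 = m ∧ ∀ k, m + 1 ≤ k → k ≤ n → (π (t k) : ℕ) + 1 = k) ↔ SameSuffix m x π := by
  constructor
  · rintro ⟨hπa, hπt⟩ k hk
    rw [Equiv.eq_symm_apply]
    obtain hkm | hkm : (k : ℕ) + 1 = m ∨ m + 1 ≤ (k : ℕ) + 1 := by omega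
    · rw [x.symm_apply_eq.2 (Fin.ext (by omega) : k = x a)]
      exact Fin.ext (by omega)
    · have hxt := ht _ hkm k.isLt
      have hπt := hπt _ hkm k.isLt
      rw [x.symm_apply_eq.2 (Fin.ext (by omega) : k = x (t (k + 1)))]
      exact Fin.ext (by omega)
  · intro h
    have hagree : ∀ s, m ≤ (x s : ℕ) + 1 → π s = x s := fun s hs => by
      simpa [Equiv.eq_symm_apply, eq_comm] using h (x s) hs
    refine ⟨by rw [hagree a (by omega), ha], fun k hk hkn => ?_⟩
    have hxt := ht k hk hkn
    rw [hagree (t k) (by omega), hxt]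

end Priorities

theorem cexp_sameSuffix_eq_of_averaging {S : Type} [Fintype S] [DecidableEq S] {n m : ℕ}
    {F : (S ≃ Fin n) → ℝ} (hm : 1 ≤ m) (hmn : m ≤ n)
    (havg : ∀ t : ℕ → S, Set.InjOn t (Set.Icc (m + 1) n) →
      ∀ a b : S, a ∉ t '' Set.Icc (m + 1) n → b ∉ t '' Set.Icc (m + 1) n →
        cexp (fun π => (π a : ℕ) + 1 = m ∧ ∀ k, m + 1 ≤ k → k ≤ n → (π (t k) : ℕ) + 1 = k) F
          = cexp (fun π => (π b : ℕ) + 1 = m ∧ ∀ k, m + 1 ≤ k → k ≤ n → (π (t k) : ℕ) + 1 = k) F)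
    {x y : S ≃ Fin n} (hxy : SameSuffix (m + 1) x y) :
    cexp (SameSuffix m x) F = cexp (SameSuffix m y) F := by
  set t : ℕ → S := fun k => x.symm ⟨min (k - 1) (n - 1), by omega⟩
  have hxt : ∀ k, m + 1 ≤ k → k ≤ n → (x (t k) : ℕ) + 1 = k := fun k _ _ => by
    simp only [t, Equiv.apply_symm_apply]
    omega
  have hyt : ∀ k, m + 1 ≤ k → k ≤ n → (y (t k) : ℕ) + 1 = k := fun k hk hkn => by
    have hxy' := hxy ⟨min (k - 1) (n - 1), by omega⟩ (show m + 1 ≤ min (k - 1) (n - 1) + 1 by omega)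
    simp only [t, hxy', Equiv.apply_symm_apply]
    omega
  set a := x.symm ⟨m - 1, by omega⟩
  set b := y.symm ⟨m - 1, by omega⟩
  have ha : (x a : ℕ) + 1 = m := by simp only [a, Equiv.apply_symm_apply]; omega
  have hb : (y b : ℕ) + 1 = m := by simp only [b, Equiv.apply_symm_apply]; omega
  have hinj : Set.InjOn t (Set.Icc (m + 1) n) := fun k hk k' hk' h => by
    have := hxt k hk.1 hk.2
    have := hxt k' hk'.1 hk'.2
    simp_all
  have hnot : ∀ (z : S ≃ Fin n) (c : S), (z c : ℕ) + 1 = m →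
      (∀ k, m + 1 ≤ k → k ≤ n → (z (t k) : ℕ) + 1 = k) → c ∉ t '' Set.Icc (m + 1) n := by
    rintro z c hc hzt ⟨k, ⟨hk, hkn⟩, hkc⟩
    have := hzt k hk hkn
    rw [hkc] at this
    omega
  have hcell : ∀ (z : S ≃ Fin n) (c : S), (z c : ℕ) + 1 = m →
      (∀ k, m + 1 ≤ k → k ≤ n → (z (t k) : ℕ) + 1 = k) →
      (fun π => (π c : ℕ) + 1 = m ∧ ∀ k, m + 1 ≤ k → k ≤ n → (π (t k) : ℕ) + 1 = k)
        = SameSuffix m z :=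
    fun z c hc hzt => funext fun π => propext (placed_iff_sameSuffix hc hzt)
  rw [← hcell x a ha hxt, ← hcell y b hb hyt]
  exact havg t hinj a b (hnot x a ha hxt) (hnot y b hb hyt)

theorem sum_Icc_sum_Icc_eq_zero (f : ℕ → ℕ → ℝ) {h n : ℕ} (hh : n ≤ h + 1) :
    ∑ i ∈ Icc (h + 1) n, ∑ j ∈ Icc (i + 1) n, f i j = 0 :=
  sum_eq_zero fun i hi => by
    rw [mem_Icc] at hi
    rw [Icc_eq_empty (by omega), sum_empty]

theorem sum_Icc_one_min {f : ℕ → ℝ} {N : ℕ} (hf : ∀ h, N < h → f h = 0) (m : ℕ) :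
    ∑ h ∈ Icc 1 (min m N), f h = ∑ h ∈ Icc 1 m, f h :=
  sum_subset (Icc_subset_Icc_right (min_le_left _ _)) fun h hm hnot => hf h (by
    simp only [mem_Icc] at hm hnot
    omega)

section Columns

variable {S : Type} {n : ℕ} {Y : ℕ → ℕ → ℕ → (S ≃ Fin n) → ℝ} {C : ℕ → (S ≃ Fin n) → ℝ}

theorem sum_Icc_one_min_sub_two_of_columns
    (hC : ∀ h π, C h π = ∑ i ∈ Icc (h + 1) n, ∑ j ∈ Icc (i + 1) n, Y h i j π)
    (m : ℕ) (π : S ≃ Fin n) :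
    ∑ h ∈ Icc 1 (min m (n - 2)), C h π = ∑ h ∈ Icc 1 m, C h π :=
  sum_Icc_one_min (fun h hh => by rw [hC]; exact sum_Icc_sum_Icc_eq_zero _ (by omega)) m

variable [Fintype S] [DecidableEq S]

theorem averagingFiltration_sameSuffix
    (hY01 : ∀ h i j π, 1 ≤ h → h < i → i < j → j ≤ n → Y h i j π = 0 ∨ Y h i j π = 1)
    (hsuffix : ∀ h i j, 1 ≤ h → h < i → i < j → j ≤ n →
      ∀ π π', SameSuffix h π π' → Y h i j π = Y h i j π')
    (hC : ∀ h π, C h π = ∑ i ∈ Icc (h + 1) n, ∑ j ∈ Icc (i + 1) n, Y h i j π)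
    (havg : ∀ m, 1 ≤ m → m ≤ n → ∀ t : ℕ → S, Set.InjOn t (Set.Icc (m + 1) n) →
      ∀ a b : S, a ∉ t '' Set.Icc (m + 1) n → b ∉ t '' Set.Icc (m + 1) n →
        cexp (fun π => (π a : ℕ) + 1 = m ∧ ∀ k, m + 1 ≤ k → k ≤ n → (π (t k) : ℕ) + 1 = k)
            (fun π => ∑ h ∈ Icc 1 (min m (n - 2)), C h π)
          = cexp (fun π => (π b : ℕ) + 1 = m ∧ ∀ k, m + 1 ≤ k → k ≤ n → (π (t k) : ℕ) + 1 = k)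
            (fun π => ∑ h ∈ Icc 1 (min m (n - 2)), C h π)) :
    AveragingFiltration SameSuffix C where
  equivalence := sameSuffix_equivalence
  monotone := sameSuffix_monotone
  nonneg h hh π := by
    rw [hC]
    refine sum_nonneg fun i hi => sum_nonneg fun j hj => ?_
    rw [mem_Icc] at hi hj
    rcases hY01 h i j π hh (by omega) (by omega) hj.2 with h0 | h1 <;> simp [*]
  const h hh π π' hππ' := by
    rw [hC, hC]
    refine sum_congr rfl fun i hi => sum_congr rfl fun j hj => ?_
    rw [mem_Icc] at hi hj
    exact hsuffix h i j hh (by omega) (by omega) hj.2 π π' hππ'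
  averaging m hm π π' hππ' := by
    by_cases hmn : m ≤ n
    · simp only [sum_Icc_one_min_sub_two_of_columns hC] at havg
      exact cexp_sameSuffix_eq_of_averaging hm hmn (havg m hm hmn) hππ'
    · have hclass : SameSuffix m π = SameSuffix m π' := funext fun τ => propext
        ⟨fun _ => sameSuffix_of_lt (by omega) π' τ, fun _ => sameSuffix_of_lt (by omega) π τ⟩
      rw [hclass]

end Columns

theorem stmt3_general
    {S : Type} [Fintype S] [DecidableEq S] (n : ℕ)
    (Y : ℕ → ℕ → ℕ → (S ≃ Fin n) → ℝ)
    (hY01 : ∀ h i j π, 1 ≤ h → h < i → i < j → j ≤ n →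
      Y h i j π = 0 ∨ Y h i j π = 1)
    -- suffix-determined: `Y h i j` depends only on the elements of priorities `h, …, n`
    (hsuffix : ∀ h i j, 1 ≤ h → h < i → i < j → j ≤ n →
      ∀ π π' : S ≃ Fin n,
        (∀ k : Fin n, h ≤ (k : ℕ) + 1 → π.symm k = π'.symm k) →
        Y h i j π = Y h i j π')
    -- column sums `C h = ∑_{h < i < j ≤ n} Y h i j`
    (C : ℕ → (S ≃ Fin n) → ℝ)
    (hC : ∀ h π, C h π =
      ∑ i ∈ Finset.Icc (h + 1) n, ∑ j ∈ Finset.Icc (i + 1) n, Y h i j π)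
    -- averaging property
    (havg : ∀ m, 1 ≤ m → m ≤ n → ∀ t : ℕ → S,
      Set.InjOn t (Set.Icc (m + 1) n) →
      ∀ a b : S, a ∉ t '' Set.Icc (m + 1) n → b ∉ t '' Set.Icc (m + 1) n →
        cexp (fun π => (π a : ℕ) + 1 = m ∧
              ∀ k, m + 1 ≤ k → k ≤ n → (π (t k) : ℕ) + 1 = k)
            (fun π => ∑ h ∈ Finset.Icc 1 (min m (n - 2)), C h π)
          = cexp (fun π => (π b : ℕ) + 1 = m ∧
              ∀ k, m + 1 ≤ k → k ≤ n → (π (t k) : ℕ) + 1 = k)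
            (fun π => ∑ h ∈ Finset.Icc 1 (min m (n - 2)), C h π)) :
    ∀ T : ℝ, 0 < T →
      unifPr (fun π =>
          T ≤ ∑ h ∈ Finset.Icc 1 (n - 2), ∑ i ∈ Finset.Icc (h + 1) n,
                ∑ j ∈ Finset.Icc (i + 1) n, Y h i j π)
        ≤ Real.exp
            (unifE (fun π => ∑ h ∈ Finset.Icc 1 (n - 2), ∑ i ∈ Finset.Icc (h + 1) n,
                ∑ j ∈ Finset.Icc (i + 1) n, Y h i j π)
              - T * Real.log 2) := by
  intro T _
  have hY : ∀ π, ∑ h ∈ Icc 1 (n - 2), ∑ i ∈ Icc (h + 1) n, ∑ j ∈ Icc (i + 1) n, Y h i j π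
      = ∑ h ∈ Icc 1 n, C h π := fun π => by
    rw [← sum_Icc_one_min_sub_two_of_columns hC n π, min_eq_right (Nat.sub_le n 2)]
    exact sum_congr rfl fun h _ => (hC h π).symm
  have hmgf := (averagingFiltration_sameSuffix hY01 hsuffix hC havg).unifE_exp_mul_sum_le
    (Real.log_two_lt_d9.le.trans (by norm_num)) (sameSuffix_of_lt (Nat.lt_succ_self n))
  simp only [hY]
  calc _ ≤ exp (-(log 2 * T)) * unifE (fun π => exp (log 2 * ∑ h ∈ Icc 1 n, C h π)) :=
        unifPr_le_exp_mul_unifE_exp _ (Real.log_nonneg one_le_two) T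
    _ ≤ exp (-(log 2 * T)) * exp (unifE fun π => ∑ h ∈ Icc 1 n, C h π) := by gcongr
    _ = _ := by rw [← Real.exp_add]; ring_nf

/-- a suffix-determined family `(Y h i j)_{1 ≤ h < i < j ≤ n}` of
`{0,1}`-valued random variables on uniformly random bijections `π : S → {1,…,n}`
(encoded as `π : S ≃ Fin n`, priority of `s` being `(π s : ℕ) + 1`) satisfying
the averaging property has an exponential upper tail for
`Y = ∑_{1 ≤ h < i < j ≤ n} Y h i j`: for every real `T > 0`,
`Pr[Y ≥ T] ≤ exp (E[Y] − T · ln 2)`. -/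
theorem stmt3
    {S : Type} [Fintype S] [DecidableEq S] (n : ℕ) (hn : 1 ≤ n)
    (hcard : Fintype.card S = n)
    (Y : ℕ → ℕ → ℕ → (S ≃ Fin n) → ℝ)
    (hY01 : ∀ h i j π, 1 ≤ h → h < i → i < j → j ≤ n →
      Y h i j π = 0 ∨ Y h i j π = 1)
    -- suffix-determined: `Y h i j` depends only on the elements of priorities `h, …, n`
    (hsuffix : ∀ h i j, 1 ≤ h → h < i → i < j → j ≤ n →
      ∀ π π' : S ≃ Fin n,
        (∀ k : Fin n, h ≤ (k : ℕ) + 1 → π.symm k = π'.symm k) →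
        Y h i j π = Y h i j π')
    -- column sums `C h = ∑_{h < i < j ≤ n} Y h i j`
    (C : ℕ → (S ≃ Fin n) → ℝ)
    (hC : ∀ h π, C h π =
      ∑ i ∈ Finset.Icc (h + 1) n, ∑ j ∈ Finset.Icc (i + 1) n, Y h i j π)
    -- averaging property
    (havg : ∀ m, 1 ≤ m → m ≤ n → ∀ t : ℕ → S,
      Set.InjOn t (Set.Icc (m + 1) n) →
      ∀ a b : S, a ∉ t '' Set.Icc (m + 1) n → b ∉ t '' Set.Icc (m + 1) n →
        cexp (fun π => (π a : ℕ) + 1 = m ∧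
              ∀ k, m + 1 ≤ k → k ≤ n → (π (t k) : ℕ) + 1 = k)
            (fun π => ∑ h ∈ Finset.Icc 1 (min m (n - 2)), C h π)
          = cexp (fun π => (π b : ℕ) + 1 = m ∧
              ∀ k, m + 1 ≤ k → k ≤ n → (π (t k) : ℕ) + 1 = k)
            (fun π => ∑ h ∈ Finset.Icc 1 (min m (n - 2)), C h π)) :
    ∀ T : ℝ, 0 < T →
      unifPr (fun π =>
          T ≤ ∑ h ∈ Finset.Icc 1 (n - 2), ∑ i ∈ Finset.Icc (h + 1) n,
                ∑ j ∈ Finset.Icc (i + 1) n, Y h i j π)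
        ≤ Real.exp
            (unifE (fun π => ∑ h ∈ Finset.Icc 1 (n - 2), ∑ i ∈ Finset.Icc (h + 1) n,
                ∑ j ∈ Finset.Icc (i + 1) n, Y h i j π)
              - T * Real.log 2) :=
  stmt3_general n Y hY01 hsuffix C hC havg
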